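/- Let j ≥ 2, let N ≥ j, and let V ∈ ℝ[x_1,…,x_N]. In the larger polynomial ring ℝ[x_0, x_1,…,x_N] define W = V − (−1)^j · Σ_{m=j}^{M} (x_0^m/m!) · Σ_{α_1,…,α_j ≥ 1, α_1+⋯+α_j=m} ∂_1^{α_1} ⋯ ∂_j^{α_j} V, where M is any integer at least the total degree of V (the inner sums vanish for m greater than the degree of V, so the sum is finite and independent of M). Then (∂_1 − ∂_0)(∂_2 − ∂_0) ⋯ (∂_j − ∂_0) W = 0. -/

import Mathlib

/-!
Write `T_j(m) = Σ_α ∂_1^{α_1} ⋯ ∂_j^{α_j} V`, the sum over the compositions `α` of `m` into `j`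
positive parts, so that `W_j = V - (-1)^j Σ_m x_0^m/m! T_j(m)`. Splitting off the first part of
a composition gives `T_{j+1}(m+1) = ∂_1 (T_{j+1}(m) + T'_j(m))`, where primes denote the same
construction on the variables `x_2, …, x_{j+1}`. Since `∂_0` shifts the exponential generating
series `Σ_m x_0^m/m! T(m)` by one, this says `(∂_1 - ∂_0) W_{j+1} = ∂_1 W'_j`. All the operators
commute, so induction on `j` reduces the claim to `W_0 = V - V = 0`. The truncation at `M` is
harmless because `T_j(m) = 0` once `m` exceeds the total degree of `V`.
-/

open MvPolynomial

/-- The polynomial `W = V − (−1)^j Σ_{m=j}^{M} (x_0^m/m!) ·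
Σ_{α_1,…,α_j ≥ 1, α_1+⋯+α_j=m} ∂_1^{α_1} ⋯ ∂_j^{α_j} V` in `ℝ[x_0,…,x_N]`,
where `V ∈ ℝ[x_1,…,x_N]` is embedded via `rename Fin.succ` and the variable `x_{i+1}`
(for `i : Fin j`) is indexed by `(Fin.castLE hjN i).succ`. -/
noncomputable def starSubdivWj (j N M : ℕ) (hjN : j ≤ N) (V : MvPolynomial (Fin N) ℝ) :
    MvPolynomial (Fin (N + 1)) ℝ :=
  rename Fin.succ V -
    (-1 : ℝ) ^ j •
      ∑ m ∈ Finset.Icc j M, C ((1 : ℝ) / m.factorial) * X (0 : Fin (N + 1)) ^ m *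
        ∑ α ∈ (Fintype.piFinset fun _ : Fin j => Finset.Icc 1 m).filter
            (fun α => ∑ i, α i = m),
          (List.finRange j).foldr
            (fun i p => (⇑(pderiv ((Fin.castLE hjN i).succ)))^[α i] p)
            (rename Fin.succ V)

def positiveCompositions (j m : ℕ) : Finset (Fin j → ℕ) :=
  (Fintype.piFinset fun _ : Fin j => Finset.Icc 1 m).filter (fun α => ∑ i, α i = m)

section Compositions

variable {j m : ℕ}

theorem mem_positiveCompositions {α : Fin j → ℕ} :
    α ∈ positiveCompositions j m ↔ (∀ i, 1 ≤ α i) ∧ ∑ i, α i = m := by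
  simp only [positiveCompositions, Finset.mem_filter, Fintype.mem_piFinset, Finset.mem_Icc]
  refine ⟨fun h => ⟨fun i => (h.1 i).1, h.2⟩, fun h => ⟨fun i => ⟨h.1 i, ?_⟩, h.2⟩⟩
  exact h.2 ▸ Finset.single_le_sum (fun _ _ => Nat.zero_le _) (Finset.mem_univ i)

theorem positiveCompositions_zero_left (m : ℕ) :
    positiveCompositions 0 m = if m = 0 then {0} else ∅ := by
  ext α
  split_ifs with hm <;> simp [mem_positiveCompositions, Subsingleton.elim α 0, hm, eq_comm]

theorem positiveCompositions_eq_empty_of_lt (h : m < j) : positiveCompositions j m = ∅ := by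
  refine Finset.eq_empty_of_forall_notMem fun α hα => ?_
  obtain ⟨hpos, hsum⟩ := mem_positiveCompositions.1 hα
  have : ∑ _i : Fin j, 1 ≤ ∑ i, α i := Finset.sum_le_sum fun i _ => hpos i
  simp only [Finset.sum_const, Finset.card_univ, Fintype.card_fin, smul_eq_mul, mul_one] at this
  omega

theorem sum_positiveCompositions_succ {M : Type*} [AddCommMonoid M]
    (f : (Fin (j + 1) → ℕ) → M) (m : ℕ) :
    ∑ α ∈ positiveCompositions (j + 1) m, f α =
      ∑ a ∈ Finset.range m,
        ∑ β ∈ positiveCompositions j (m - (a + 1)), f (Fin.cons (a + 1) β) := by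
  rw [Finset.sum_sigma']
  refine Finset.sum_nbij' (fun α => ⟨α 0 - 1, Fin.tail α⟩) (fun x => Fin.cons (x.1 + 1) x.2)
    ?_ ?_ ?_ ?_ ?_
  · intro α hα
    simp only [mem_positiveCompositions, Fin.forall_fin_succ, Fin.sum_univ_succ] at hα
    simp only [Finset.mem_sigma, Finset.mem_range, mem_positiveCompositions]
    exact ⟨by omega, hα.1.2, by simp only [Fin.tail]; omega⟩
  · rintro ⟨a, β⟩ h
    simp only [Finset.mem_sigma, Finset.mem_range, mem_positiveCompositions] at h
    simp only [mem_positiveCompositions, Fin.forall_fin_succ, Fin.sum_cons, Fin.cons_zero,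
      Fin.cons_succ]
    exact ⟨⟨by omega, h.2.1⟩, by omega⟩
  · intro α hα
    have := (mem_positiveCompositions.1 hα).1 0
    simp only [Nat.sub_add_cancel this, Fin.cons_self_tail]
  · rintro ⟨a, β⟩ _
    simp
  · intro α hα
    have := (mem_positiveCompositions.1 hα).1 0
    simp only [Nat.sub_add_cancel this, Fin.cons_self_tail]

end Compositions

theorem List.foldr_apply_of_commute {α β : Type*} {f : α → β → β} {g : β → β}
    (h : ∀ a, Function.Commute (f a) g) (l : List α) (x : β) :
    l.foldr f (g x) = g (l.foldr f x) := by
  induction l with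
  | nil => rfl
  | cons a l ih => rw [List.foldr_cons, List.foldr_cons, ih, h a]

namespace MvPolynomial

section PDeriv

variable {R σ : Type*} [CommSemiring R]

theorem iterate_pderiv_sum {ι : Type*} (i : σ) (n : ℕ) (s : Finset ι)
    (f : ι → MvPolynomial σ R) :
    (⇑(pderiv i))^[n] (∑ a ∈ s, f a) = ∑ a ∈ s, (⇑(pderiv i))^[n] (f a) := by
  have h := map_sum ((pderiv i).toLinearMap ^ n) f s
  rwa [Module.End.coe_pow, Derivation.coeFn_coe] at h

theorem degree_lt_of_mem_support_pderiv {q : MvPolynomial σ R} {d : ℕ} {i : σ}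
    (hq : ∀ s ∈ q.support, s.degree < d + 1) : ∀ s ∈ (pderiv i q).support, s.degree < d := by
  intro s hs
  rw [mem_support_iff, coeff_pderiv] at hs
  simpa using hq _ (mem_support_iff.2 (left_ne_zero_of_mul hs))

theorem degree_lt_of_mem_support_iterate_pderiv {q : MvPolynomial σ R} {d : ℕ} {i : σ}
    (t : ℕ) (hq : ∀ s ∈ q.support, s.degree < d + t) :
    ∀ s ∈ ((⇑(pderiv i))^[t] q).support, s.degree < d := by
  induction t generalizing d with
  | zero => simpa using hq
  | succ t ih =>
    rw [Function.iterate_succ_apply']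
    exact degree_lt_of_mem_support_pderiv (ih fun s hs => by have := hq s hs; omega)

noncomputable def iteratedPDeriv {j : ℕ} (v : Fin j → σ) (α : Fin j → ℕ)
    (p : MvPolynomial σ R) : MvPolynomial σ R :=
  (List.finRange j).foldr (fun i q => (⇑(pderiv (v i)))^[α i] q) p

variable {j : ℕ}

@[simp]
theorem iteratedPDeriv_zero_length (v : Fin 0 → σ) (α : Fin 0 → ℕ) (p : MvPolynomial σ R) :
    iteratedPDeriv v α p = p := by
  simp [iteratedPDeriv]

theorem iteratedPDeriv_succ (v : Fin (j + 1) → σ) (α : Fin (j + 1) → ℕ)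
    (p : MvPolynomial σ R) :
    iteratedPDeriv v α p =
      (⇑(pderiv (v 0)))^[α 0] (iteratedPDeriv (Fin.tail v) (Fin.tail α) p) := by
  simp only [iteratedPDeriv, List.finRange_succ, List.foldr_cons, List.foldr_map]
  rfl

theorem iteratedPDeriv_zero (v : Fin j → σ) (α : Fin j → ℕ) :
    iteratedPDeriv v α (0 : MvPolynomial σ R) = 0 :=
  List.foldr_fixed' (fun _ => iterate_map_zero _ _) _

theorem degree_lt_of_mem_support_iteratedPDeriv {v : Fin j → σ} {α : Fin j → ℕ}
    {p : MvPolynomial σ R} {d : ℕ} (hp : ∀ s ∈ p.support, s.degree < d + ∑ i, α i) :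
    ∀ s ∈ (iteratedPDeriv v α p).support, s.degree < d := by
  induction j generalizing d with
  | zero => simpa using hp
  | succ j ih =>
    rw [iteratedPDeriv_succ]
    refine degree_lt_of_mem_support_iterate_pderiv _ (ih fun s hs => ?_)
    have := hp s hs
    rw [Fin.sum_univ_succ] at this
    simp only [Fin.tail]
    omega

theorem iteratedPDeriv_eq_zero_of_totalDegree_lt {v : Fin j → σ} {α : Fin j → ℕ}
    {p : MvPolynomial σ R} (h : p.totalDegree < ∑ i, α i) : iteratedPDeriv v α p = 0 := by
  have hlt := degree_lt_of_mem_support_iteratedPDeriv (v := v) (d := 0)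
    fun s hs => (le_totalDegree hs).trans_lt (by simpa using h)
  exact support_eq_empty.1
    (Finset.eq_empty_of_forall_notMem fun s hs => Nat.not_lt_zero _ (hlt s hs))

noncomputable def compositionPDerivSum (v : Fin j → σ) (p : MvPolynomial σ R) (m : ℕ) :
    MvPolynomial σ R :=
  ∑ α ∈ positiveCompositions j m, iteratedPDeriv v α p

theorem compositionPDerivSum_zero_length (v : Fin 0 → σ) (p : MvPolynomial σ R) (m : ℕ) :
    compositionPDerivSum v p m = if m = 0 then p else 0 := by
  rw [compositionPDerivSum, positiveCompositions_zero_left]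
  split_ifs <;> simp

theorem compositionPDerivSum_succ (v : Fin (j + 1) → σ) (p : MvPolynomial σ R) (m : ℕ) :
    compositionPDerivSum v p m =
      ∑ a ∈ Finset.range m,
        (⇑(pderiv (v 0)))^[a + 1] (compositionPDerivSum (Fin.tail v) p (m - (a + 1))) := by
  simp only [compositionPDerivSum, sum_positiveCompositions_succ, iterate_pderiv_sum,
    iteratedPDeriv_succ, Fin.cons_zero, Fin.tail_cons]

theorem compositionPDerivSum_succ_succ (v : Fin (j + 1) → σ) (p : MvPolynomial σ R) (m : ℕ) :
    compositionPDerivSum v p (m + 1) =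
      pderiv (v 0) (compositionPDerivSum v p m + compositionPDerivSum (Fin.tail v) p m) := by
  rw [compositionPDerivSum_succ, Finset.sum_range_succ', compositionPDerivSum_succ, map_add,
    map_sum]
  simp only [Function.iterate_succ_apply', Nat.add_sub_add_right, zero_add, Nat.add_sub_cancel,
    Function.iterate_zero_apply]

theorem compositionPDerivSum_eq_zero_of_totalDegree_lt (v : Fin j → σ) {p : MvPolynomial σ R}
    {m : ℕ} (h : p.totalDegree < m) : compositionPDerivSum v p m = 0 :=
  Finset.sum_eq_zero fun _ hα =>
    iteratedPDeriv_eq_zero_of_totalDegree_lt ((mem_positiveCompositions.1 hα).2 ▸ h)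

theorem compositionPDerivSum_eq_zero_of_lt (v : Fin j → σ) (p : MvPolynomial σ R) {m : ℕ}
    (h : m < j) : compositionPDerivSum v p m = 0 := by
  rw [compositionPDerivSum, positiveCompositions_eq_empty_of_lt h, Finset.sum_empty]

end PDeriv

section Commute

variable {R σ : Type*} [CommRing R] {j : ℕ}

theorem pderiv_pderiv_comm (a b : σ) (p : MvPolynomial σ R) :
    pderiv a (pderiv b p) = pderiv b (pderiv a p) := by
  classical
  have h : ⁅pderiv a, pderiv b⁆ = (0 : Derivation R (MvPolynomial σ R) (MvPolynomial σ R)) :=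
    derivation_ext fun k => by
      rw [Derivation.commutator_apply]
      simp [Pi.single_apply, apply_ite]
  have hp := congr($h p)
  rwa [Derivation.commutator_apply, Derivation.zero_apply, sub_eq_zero] at hp

theorem commute_pderiv (a b : σ) :
    Function.Commute ⇑(pderiv a : Derivation R (MvPolynomial σ R) (MvPolynomial σ R))
      ⇑(pderiv b) :=
  pderiv_pderiv_comm a b

theorem pderiv_iteratedPDeriv (i : σ) (v : Fin j → σ) (α : Fin j → ℕ)
    (p : MvPolynomial σ R) :
    pderiv i (iteratedPDeriv v α p) = iteratedPDeriv v α (pderiv i p) :=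
  (List.foldr_apply_of_commute (fun _ => (commute_pderiv _ i).iterate_left _) _ p).symm

theorem foldr_pderiv_sub_pderiv_comm {ι : Type*}
    {D : Derivation R (MvPolynomial σ R) (MvPolynomial σ R)}
    (hD : ∀ i, Function.Commute ⇑D ⇑(pderiv i)) (v : ι → σ) (z : σ) (l : List ι)
    (q : MvPolynomial σ R) :
    l.foldr (fun i q => pderiv (v i) q - pderiv z q) (D q) =
      D (l.foldr (fun i q => pderiv (v i) q - pderiv z q) q) :=
  List.foldr_apply_of_commute (fun i x => by rw [map_sub, hD, hD]) l q

theorem pderiv_compositionPDerivSum (i : σ) (v : Fin j → σ) (p : MvPolynomial σ R) (m : ℕ) :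
    pderiv i (compositionPDerivSum v p m) = compositionPDerivSum v (pderiv i p) m := by
  simp only [compositionPDerivSum, map_sum, pderiv_iteratedPDeriv]

end Commute

section TruncEGF

variable {K σ : Type*} [Field K]

noncomputable def truncEGF (z : σ) (n : ℕ) (T : ℕ → MvPolynomial σ K) : MvPolynomial σ K :=
  ∑ m ∈ Finset.range n, C ((1 : K) / m.factorial) * X z ^ m * T m

variable {z : σ} {n : ℕ}

theorem truncEGF_add (T T' : ℕ → MvPolynomial σ K) :
    truncEGF z n (fun m => T m + T' m) = truncEGF z n T + truncEGF z n T' := by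
  simp only [truncEGF, mul_add, Finset.sum_add_distrib]

theorem truncEGF_succ_of_eq_zero {T : ℕ → MvPolynomial σ K} (h : T n = 0) :
    truncEGF z (n + 1) T = truncEGF z n T := by
  rw [truncEGF, Finset.sum_range_succ, h, mul_zero, add_zero, truncEGF]

theorem truncEGF_single_zero (p : MvPolynomial σ K) (hn : 0 < n) :
    truncEGF z n (fun m => if m = 0 then p else 0) = p := by
  rw [truncEGF, Finset.sum_eq_single_of_mem 0 (Finset.mem_range.2 hn)]
  · simp
  · intro m _ hm
    simp [hm]

theorem pderiv_truncEGF_of_ne {b : σ} (hb : z ≠ b) (T : ℕ → MvPolynomial σ K) :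
    pderiv b (truncEGF z n T) = truncEGF z n (fun m => pderiv b (T m)) := by
  rw [truncEGF, map_sum]
  refine Finset.sum_congr rfl fun m _ => ?_
  rw [mul_assoc, pderiv_C_mul, pderiv_mul, pderiv_pow, pderiv_X_of_ne hb]
  ring

theorem pderiv_truncEGF_self [CharZero K] {T : ℕ → MvPolynomial σ K}
    (hT : ∀ m, pderiv z (T m) = 0) :
    pderiv z (truncEGF z (n + 1) T) = truncEGF z n (fun m => T (m + 1)) := by
  rw [truncEGF, Finset.sum_range_succ', map_add, map_sum, truncEGF, pow_zero, mul_one,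
    pderiv_C_mul, hT, mul_zero, add_zero]
  refine Finset.sum_congr rfl fun m _ => ?_
  rw [mul_assoc, pderiv_C_mul, pderiv_mul, pderiv_pow, pderiv_X_self, hT, Nat.add_sub_cancel,
    ← map_natCast (C : K →+* MvPolynomial σ K)]
  have hfac : (1 : K) / (m + 1).factorial * (m + 1 : ℕ) = 1 / m.factorial := by
    rw [Nat.factorial_succ]
    push_cast
    field_simp
  rw [← hfac, map_mul]
  ring

end TruncEGF

section StarSubdiv

variable {K σ : Type*} [Field K] {j n : ℕ} {z : σ} {p : MvPolynomial σ K}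

theorem pderiv_sub_pderiv_truncEGF_compositionPDerivSum [CharZero K] {v : Fin (j + 1) → σ}
    (hv : v 0 ≠ z) (hp : pderiv z p = 0) (hn : p.totalDegree < n) :
    pderiv (v 0) (truncEGF z n (compositionPDerivSum v p)) -
        pderiv z (truncEGF z n (compositionPDerivSum v p)) =
      -pderiv (v 0) (truncEGF z n (compositionPDerivSum (Fin.tail v) p)) := by
  obtain ⟨n, rfl⟩ : ∃ n', n = n' + 1 := ⟨n - 1, by omega⟩
  have hz : ∀ m, pderiv z (compositionPDerivSum v p m) = 0 := fun m => by
    rw [pderiv_compositionPDerivSum, hp, compositionPDerivSum, Finset.sum_eq_zero]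
    exact fun α _ => iteratedPDeriv_zero v α
  have hshift : pderiv z (truncEGF z (n + 1) (compositionPDerivSum v p)) =
      pderiv (v 0) (truncEGF z (n + 1) (compositionPDerivSum v p)) +
        pderiv (v 0) (truncEGF z (n + 1) (compositionPDerivSum (Fin.tail v) p)) := by
    rw [pderiv_truncEGF_self hz,
      ← truncEGF_succ_of_eq_zero (T := fun m => compositionPDerivSum v p (m + 1))
        (compositionPDerivSum_eq_zero_of_totalDegree_lt v hn)]
    simp only [compositionPDerivSum_succ_succ, map_add, pderiv_truncEGF_of_ne hv.symm,
      truncEGF_add]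
  rw [hshift]
  abel

noncomputable def starSubdivW (z : σ) (n : ℕ) (v : Fin j → σ) (p : MvPolynomial σ K) :
    MvPolynomial σ K :=
  p - (-1 : K) ^ j • truncEGF z n (compositionPDerivSum v p)

theorem sum_Icc_eq_truncEGF (v : Fin j → σ) (p : MvPolynomial σ K) (M : ℕ) :
    ∑ m ∈ Finset.Icc j M, C ((1 : K) / m.factorial) * X z ^ m * compositionPDerivSum v p m =
      truncEGF z (M + 1) (compositionPDerivSum v p) := by
  refine Finset.sum_subset (fun m hm => ?_) fun m hmM hm => ?_
  · simp only [Finset.mem_Icc, Finset.mem_range] at hm ⊢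
    omega
  · simp only [Finset.mem_Icc, Finset.mem_range] at hm hmM
    rw [compositionPDerivSum_eq_zero_of_lt v p (by omega), mul_zero]

theorem starSubdivW_zero_length (v : Fin 0 → σ) (hn : 0 < n) : starSubdivW z n v p = 0 := by
  rw [starSubdivW, _root_.funext (compositionPDerivSum_zero_length v p),
    truncEGF_single_zero p hn, pow_zero, one_smul, sub_self]

theorem pderiv_sub_pderiv_starSubdivW [CharZero K] {v : Fin (j + 1) → σ} (hv : v 0 ≠ z)
    (hp : pderiv z p = 0) (hn : p.totalDegree < n) :
    pderiv (v 0) (starSubdivW z n v p) - pderiv z (starSubdivW z n v p) =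
      pderiv (v 0) (starSubdivW z n (Fin.tail v) p) := by
  have h := pderiv_sub_pderiv_truncEGF_compositionPDerivSum hv hp hn
  simp only [starSubdivW, map_sub, Derivation.map_smul, hp, pow_succ]
  linear_combination (norm := module) (-1 : K) ^ j • h

theorem foldr_pderiv_sub_pderiv_starSubdivW [CharZero K] (v : Fin j → σ)
    (hv : ∀ i, v i ≠ z) (hp : pderiv z p = 0) (hn : p.totalDegree < n) :
    (List.finRange j).foldr (fun i q => pderiv (v i) q - pderiv z q)
      (starSubdivW z n v p) = 0 := by
  induction j with
  | zero => simp [starSubdivW_zero_length v (Nat.zero_lt_of_lt hn)]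
  | succ j ih =>
    have hcomm : ∀ i, Function.Commute
        ⇑(pderiv (v 0) - pderiv z : Derivation K (MvPolynomial σ K) (MvPolynomial σ K))
        ⇑(pderiv i) := fun i q => by
      simp only [Derivation.sub_apply, map_sub, pderiv_pderiv_comm]
    rw [List.finRange_succ, List.foldr_cons, List.foldr_map, ← Derivation.sub_apply,
      ← foldr_pderiv_sub_pderiv_comm hcomm, Derivation.sub_apply,
      pderiv_sub_pderiv_starSubdivW (hv 0) hp hn,
      foldr_pderiv_sub_pderiv_comm (commute_pderiv (v 0))]
    exact (congrArg _ (ih (Fin.tail v) fun i => hv i.succ)).trans (map_zero _)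

end StarSubdiv

theorem pderiv_zero_rename_succ {R : Type*} [CommSemiring R] {N : ℕ}
    (V : MvPolynomial (Fin N) R) : pderiv (0 : Fin (N + 1)) (rename Fin.succ V) = 0 := by
  classical
  refine pderiv_eq_zero_of_notMem_vars fun h => ?_
  obtain ⟨i, -, hi⟩ := Finset.mem_image.1 (vars_rename _ _ h)
  exact Fin.succ_ne_zero i hi

end MvPolynomial

theorem starSubdivWj_eq_starSubdivW (j N M : ℕ) (hjN : j ≤ N) (V : MvPolynomial (Fin N) ℝ) :
    starSubdivWj j N M hjN V =
      starSubdivW 0 (M + 1) (fun i => (Fin.castLE hjN i).succ) (rename Fin.succ V) := by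
  rw [starSubdivW, ← sum_Icc_eq_truncEGF]
  rfl

theorem stmt6_general (j N M : ℕ) (hjN : j ≤ N) (V : MvPolynomial (Fin N) ℝ)
    (hM : V.totalDegree ≤ M) :
    (List.finRange j).foldr
        (fun i p => pderiv ((Fin.castLE hjN i).succ) p - pderiv (0 : Fin (N + 1)) p)
        (starSubdivWj j N M hjN V) = 0 := by
  rw [starSubdivWj_eq_starSubdivW]
  exact foldr_pderiv_sub_pderiv_starSubdivW _ (fun i => Fin.succ_ne_zero _)
    (pderiv_zero_rename_succ V) ((totalDegree_rename_le _ V).trans_lt (Nat.lt_succ_of_le hM))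

/-- `(∂_1 − ∂_0)(∂_2 − ∂_0) ⋯ (∂_j − ∂_0) W = 0` for `j ≥ 2`, `N ≥ j`,
and `M` at least the total degree of `V`. -/
theorem stmt6 (j N M : ℕ) (hj : 2 ≤ j) (hjN : j ≤ N) (V : MvPolynomial (Fin N) ℝ)
    (hM : V.totalDegree ≤ M) :
    (List.finRange j).foldr
        (fun i p => pderiv ((Fin.castLE hjN i).succ) p - pderiv (0 : Fin (N + 1)) p)
        (starSubdivWj j N M hjN V) = 0 :=
  stmt6_general j N M hjN V hM
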